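/- Consider the four-job instance on a path with jobs e₁: r=0, d=1, p=1; e₂: r=0, d=3, p=2; e₃: r=1, d=4, p=2; e₄: r=3, d=4, p=1, and time horizon T = 4. Then (i) for every feasible non-preemptive schedule, the union of the four processing intervals contains all of [0,4], so the total connectivity time is 0; and (ii) there exists a feasible preemptive schedule (e₂ processed during [0,2], e₃ during [1,2]∪[3,4], e₁ during [0,1], e₄ during [3,4]) whose processing sets leave the interval [2,3] free, so its total connectivity time is at least 1. Hence the power of preemption for MAXCONNECTIVITY on a path is unbounded. -/

import Mathlib

open MeasureTheory Set
open scoped ENNReal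

/-- Feasibility of a non-preemptive schedule of jobs on a path: job `i` starts at `s i`
within its window and is processed during `[s i, s i + p i]`. -/
def PathNPFeasible {ι : Type*} (r d p : ι → ℝ) (s : ι → ℝ) : Prop :=
  ∀ i, r i ≤ s i ∧ s i + p i ≤ d i

/-- Feasibility of a preemptive schedule of jobs on a path: job `i` is processed during the
measurable set `S i ⊆ [r i, d i]` of measure `p i`. -/
def PathPFeasible {ι : Type*} (r d p : ι → ℝ) (S : ι → Set ℝ) : Prop :=
  ∀ i, MeasurableSet (S i) ∧ S i ⊆ Set.Icc (r i) (d i) ∧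
    volume (S i) = ENNReal.ofReal (p i)

/-- The busy time of a non-preemptive schedule: the measure of the union of the
processing intervals (= the total disconnected time on a path). -/
noncomputable def npBusy {ι : Type*} (p : ι → ℝ) (s : ι → ℝ) : ℝ≥0∞ :=
  volume (⋃ i, Set.Icc (s i) (s i + p i))

/-- The busy time of a preemptive schedule: the measure of the union of the
processing sets (= the total disconnected time on a path). -/
noncomputable def pBusy {ι : Type*} (S : ι → Set ℝ) : ℝ≥0∞ :=
  volume (⋃ i, S i)

/-- Release dates of the four-job instance `e₁, e₂, e₃, e₄`. -/
def rr : Fin 4 → ℝ := ![0, 0, 1, 3]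

/-- Deadlines of the four-job instance. -/
def dd : Fin 4 → ℝ := ![1, 3, 4, 4]

/-- Processing times of the four-job instance. -/
def pp : Fin 4 → ℝ := ![1, 2, 2, 1]

/-- The claimed preemptive schedule: `e₁` during `[0,1]`, `e₂` during `[0,2]`,
`e₃` during `[1,2] ∪ [3,4]`, `e₄` during `[3,4]`. -/
def Spmtn : Fin 4 → Set ℝ :=
  ![Set.Icc 0 1, Set.Icc 0 2, Set.Icc 1 2 ∪ Set.Icc 3 4, Set.Icc 3 4]

/-!
A non-preemptive `e₁` is pinned to `[0,1]` and `e₄` to `[3,4]`, while `e₂` must start by `1`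
and end after `2`, and `e₃` must start by `2` and end after `3`; consecutive intervals of the
chain `e₁, e₂, e₃, e₄` therefore overlap and cover `[0,4]`. Preemption lets `e₃` pause during
`[2,3]`, when `e₂` is done and `e₄` is not yet released.
-/

theorem Set.Icc_subset_Icc_union_Icc_of_le {α : Type*} [LinearOrder α] {a a' b c d d' : α}
    (ha : a' ≤ a) (hcb : c ≤ b) (hd : d ≤ d') : Icc a d ⊆ Icc a' b ∪ Icc c d' :=
  (Icc_subset_Icc ha hd).trans <|
    Icc_subset_Icc_union_Icc.trans (union_subset_union_right _ (Icc_subset_Icc_left hcb))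

theorem Real.volume_Icc_union_Icc {a b c d : ℝ} (hab : a ≤ b) (hbc : b < c) (hcd : c ≤ d) :
    volume (Icc a b ∪ Icc c d) = ENNReal.ofReal (b - a + (d - c)) := by
  have hdisj : Disjoint (Icc a b) (Icc c d) :=
    disjoint_left.2 fun x hx hx' => (hx.2.trans_lt hbc).not_ge hx'.1
  rw [measure_union hdisj measurableSet_Icc, Real.volume_Icc, Real.volume_Icc,
    ENNReal.ofReal_add (sub_nonneg.2 hab) (sub_nonneg.2 hcd)]

theorem Icc_zero_four_subset_of_pathNPFeasible {s : Fin 4 → ℝ}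
    (hs : PathNPFeasible rr dd pp s) : Icc 0 4 ⊆ ⋃ i, Icc (s i) (s i + pp i) := by
  have h0 := hs 0; have h1 := hs 1; have h2 := hs 2; have h3 := hs 3
  simp only [rr, dd, pp, Fin.isValue, Matrix.cons_val] at h0 h1 h2 h3
  have hp : pp 0 = 1 ∧ pp 1 = 2 ∧ pp 2 = 2 ∧ pp 3 = 1 := by simp [pp]
  set J : Fin 4 → Set ℝ := fun i => Icc (s i) (s i + pp i)
  calc Icc (0 : ℝ) 4 ⊆ J 0 ∪ Icc (s 1) 4 :=
        Icc_subset_Icc_union_Icc_of_le (by linarith) (by linarith) le_rfl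
    _ ⊆ J 0 ∪ (J 1 ∪ Icc (s 2) 4) :=
        union_subset_union_right _ <| Icc_subset_Icc_union_Icc_of_le le_rfl (by linarith) le_rfl
    _ ⊆ J 0 ∪ (J 1 ∪ (J 2 ∪ J 3)) :=
        union_subset_union_right _ <| union_subset_union_right _ <|
          Icc_subset_Icc_union_Icc_of_le le_rfl (by linarith) (by linarith)
    _ ⊆ ⋃ i, J i :=
        union_subset (subset_iUnion J 0) <| union_subset (subset_iUnion J 1) <|
          union_subset (subset_iUnion J 2) (subset_iUnion J 3)

theorem pathPFeasible_Spmtn : PathPFeasible rr dd pp Spmtn := by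
  intro i
  fin_cases i <;> simp only [Spmtn, rr, dd, pp, Fin.zero_eta, Fin.mk_one, Fin.reduceFinMk,
    Matrix.cons_val, Matrix.cons_val_zero, Matrix.cons_val_one]
  · exact ⟨measurableSet_Icc, subset_rfl, by norm_num [Real.volume_Icc]⟩
  · exact ⟨measurableSet_Icc, Icc_subset_Icc_right (by norm_num), by norm_num [Real.volume_Icc]⟩
  · refine ⟨measurableSet_Icc.union measurableSet_Icc,
      union_subset (Icc_subset_Icc_right (by norm_num)) (Icc_subset_Icc_left (by norm_num)), ?_⟩
    rw [Real.volume_Icc_union_Icc] <;> norm_num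
  · exact ⟨measurableSet_Icc, subset_rfl, by norm_num [Real.volume_Icc]⟩

theorem disjoint_Ioo_two_three_Spmtn (i : Fin 4) : Disjoint (Ioo (2 : ℝ) 3) (Spmtn i) := by
  rw [disjoint_left]
  rintro x ⟨h2, h3⟩
  fin_cases i <;> simp only [Spmtn, Fin.zero_eta, Fin.mk_one, Fin.reduceFinMk, Matrix.cons_val,
    mem_union, mem_Icc] <;> grind

theorem power_of_preemption_unbounded_max :
    (∀ s : Fin 4 → ℝ, PathNPFeasible rr dd pp s →
      (Set.Icc (0 : ℝ) 4 ⊆ ⋃ i, Set.Icc (s i) (s i + pp i)) ∧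
      volume (Set.Icc (0 : ℝ) 4 \ ⋃ i, Set.Icc (s i) (s i + pp i)) = 0) ∧
    (PathPFeasible rr dd pp Spmtn ∧
      Set.Ioo (2 : ℝ) 3 ∩ (⋃ i, Spmtn i) = ∅ ∧
      1 ≤ volume (Set.Icc (0 : ℝ) 4 \ ⋃ i, Spmtn i)) := by
  have hfree : Disjoint (Ioo (2 : ℝ) 3) (⋃ i, Spmtn i) :=
    disjoint_iUnion_right.2 disjoint_Ioo_two_three_Spmtn
  refine ⟨fun s hs => ?_, pathPFeasible_Spmtn, hfree.inter_eq, ?_⟩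
  · have hcover := Icc_zero_four_subset_of_pathNPFeasible hs
    exact ⟨hcover, by rw [sdiff_eq_empty.2 hcover, measure_empty]⟩
  · have hIoo : Ioo (2 : ℝ) 3 ⊆ Icc 0 4 :=
      Ioo_subset_Icc_self.trans (Icc_subset_Icc (by norm_num) (by norm_num))
    calc (1 : ℝ≥0∞) = volume (Ioo (2 : ℝ) 3) := by norm_num [Real.volume_Ioo]
      _ ≤ _ := measure_mono (subset_sdiff.2 ⟨hIoo, hfree⟩)
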